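/- Let A₁, A₂, A₃ be symmetric positive semidefinite matrices with A₁ + A₂ + A₃ = I. Then the average over permutations of (A_{σ(1)} - A_{σ(3)}) A_{σ(2)} (A_{σ(1)} - A_{σ(3)}) equals the average over i of -A_i + 4A_i² - 3A_i³. -/

import Mathlib

/-! Substituting `A 2 = 1 - A 0 - A 1`, both sides become the same noncommutative polynomial in
`A 0` and `A 1`. -/

open Equiv

theorem Equiv.Perm.sum_fin_three {M : Type*} [AddCommMonoid M] (f : Perm (Fin 3) → M) :
    ∑ σ, f σ = f 1 + f (swap 0 1) + f (swap 0 2) + f (swap 1 2) +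
      f (swap 0 1 * swap 0 2) + f (swap 0 2 * swap 0 1) := by
  have huniv : (Finset.univ : Finset (Perm (Fin 3))) =
      {1, swap 0 1, swap 0 2, swap 1 2, swap 0 1 * swap 0 2, swap 0 2 * swap 0 1} := by decide
  rw [huniv, Finset.sum_insert (by decide), Finset.sum_insert (by decide),
    Finset.sum_insert (by decide), Finset.sum_insert (by decide),
    Finset.sum_insert (by decide), Finset.sum_singleton]
  abel

theorem sum_perm_sub_mul_mul_sub_of_sum_eq_one {R : Type*} [Ring R] {a : Fin 3 → R}
    (h : a 0 + a 1 + a 2 = 1) :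
    ∑ σ : Perm (Fin 3), (a (σ 0) - a (σ 2)) * a (σ 1) * (a (σ 0) - a (σ 2)) =
      2 • ∑ i, (-a i + 4 • a i ^ 2 - 3 • a i ^ 3) := by
  have h2 : a 2 = 1 - a 0 - a 1 := by rw [← h]; abel
  rw [Perm.sum_fin_three, Fin.sum_univ_three]
  simp only [Perm.coe_one, id_eq, Perm.coe_mul, Function.comp_apply, swap_apply_left,
    swap_apply_right, swap_apply_of_ne_of_ne, ne_eq, Fin.reduceEq, not_false_eq_true, h2]
  noncomm_ring

theorem stmt11_general {n : ℕ} (A : Fin 3 → Matrix (Fin n) (Fin n) ℝ)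
    (hsum : A 0 + A 1 + A 2 = (1 : Matrix (Fin n) (Fin n) ℝ)) :
    (1 / 6 : ℝ) • ∑ σ : Equiv.Perm (Fin 3),
        (A (σ 0) - A (σ 2)) * A (σ 1) * (A (σ 0) - A (σ 2)) =
      (1 / 3 : ℝ) • ∑ i : Fin 3, (-(A i) + (4 : ℝ) • (A i) ^ 2 - (3 : ℝ) • (A i) ^ 3) := by
  simp only [sum_perm_sub_mul_mul_sub_of_sum_eq_one hsum, ofNat_smul_eq_nsmul ℝ]
  module

theorem stmt11 {n : ℕ} (A : Fin 3 → Matrix (Fin n) (Fin n) ℝ)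
    (hA : ∀ i, (A i).PosSemidef)
    (hsum : A 0 + A 1 + A 2 = (1 : Matrix (Fin n) (Fin n) ℝ)) :
    (1 / 6 : ℝ) • ∑ σ : Equiv.Perm (Fin 3),
        (A (σ 0) - A (σ 2)) * A (σ 1) * (A (σ 0) - A (σ 2)) =
      (1 / 3 : ℝ) • ∑ i : Fin 3, (-(A i) + (4 : ℝ) • (A i) ^ 2 - (3 : ℝ) • (A i) ^ 3) :=
  stmt11_general A hsum
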